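/- arXiv:2004.09563 — 3 statements merged into one kernel-verified Lean document; each statement's English description precedes it below -/
import Mathlib

section
/- Let x_1, …, x_n be points in ℝ^d, let μ, μ* ∈ ℝ^d, let 1 ≤ m ≤ n, and let S ⊆ {1,…,n} with |S| = m be such that ‖x_i − μ‖₂ ≤ ‖x_j − μ‖₂ for every i ∈ S and j ∉ S (i.e., S consists of m points closest to μ). Then for any subset S* ⊆ {1,…,n} with |S*| = m, the empirical mean μ' = (1/m) Σ_{i∈S} x_i satisfies ‖μ' − μ*‖₂ ≤ (2|S \ S*|/m)·‖μ − μ*‖₂ + (1/m) Σ_{i∈S*} ‖x_i − μ*‖₂. -/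
set_option autoImplicit false

open Finset

/-!
Since `|S| = |S*|`, the sets `S \ S*` and `S* \ S` can be matched, and each point of `S` is at least
as close to `μ` as each point outside `S`; so the distances to `μ` summed over `S \ S*` are at most
those summed over `S* \ S`. Re-centring from `μ` to `μ*` changes each distance by at most
`‖μ - μ*‖`, which gives `∑_{S} ‖xᵢ - μ*‖ ≤ ∑_{S*} ‖xᵢ - μ*‖ + 2 |S \ S*| ‖μ - μ*‖`; the triangle
inequality for the mean `μ'` finishes the proof.
-/

section Selection

variable {ι : Type*} [DecidableEq ι] {S T : Finset ι}

theorem Finset.sum_sdiff_le_sum_sdiff_of_forall_le {M : Type*} [AddCommMonoid M] [PartialOrder M]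
    [IsOrderedAddMonoid M] (f : ι → M) (hcard : #S = #T)
    (hsel : ∀ i ∈ S, ∀ j ∉ S, f i ≤ f j) :
    ∑ i ∈ S \ T, f i ≤ ∑ j ∈ T \ S, f j := by
  let e := equivOfCardEq (card_sdiff_comm hcard)
  rw [← sum_coe_sort (S \ T), ← sum_coe_sort (T \ S), ← e.sum_comp]
  exact sum_le_sum fun i _ =>
    hsel i (mem_sdiff.mp i.2).1 (e i) (mem_sdiff.mp (e i).2).2

theorem Finset.sum_le_sum_add_of_forall_le_of_abs_sub_le (f g : ι → ℝ) {r : ℝ} (hcard : #S = #T)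
    (hsel : ∀ i ∈ S, ∀ j ∉ S, f i ≤ f j) (hfg : ∀ i, |f i - g i| ≤ r) :
    ∑ i ∈ S, g i ≤ ∑ i ∈ T, g i + 2 * #(S \ T) * r := by
  have hmatch := sum_sdiff_le_sum_sdiff_of_forall_le f hcard hsel
  have hgf : ∑ i ∈ S \ T, g i ≤ ∑ i ∈ S \ T, (f i + r) :=
    sum_le_sum fun i _ => by linarith [(abs_le.mp (hfg i)).1]
  have hfg' : ∑ j ∈ T \ S, f j ≤ ∑ j ∈ T \ S, (g j + r) :=
    sum_le_sum fun j _ => by linarith [(abs_le.mp (hfg j)).2]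
  rw [sum_add_distrib, sum_const, nsmul_eq_mul] at hgf hfg'
  rw [← card_sdiff_comm hcard] at hfg'
  rw [← sum_inter_add_sum_sdiff S T, ← sum_inter_add_sum_sdiff T S, inter_comm]
  linarith

end Selection

theorem norm_inv_card_smul_sum_sub_le {ι E : Type*} [SeminormedAddCommGroup E] [NormedSpace ℝ E]
    {S : Finset ι} (hS : S.Nonempty) (x : ι → E) (ν : E) :
    ‖(#S : ℝ)⁻¹ • ∑ i ∈ S, x i - ν‖ ≤ (#S : ℝ)⁻¹ * ∑ i ∈ S, ‖x i - ν‖ := by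
  have hS0 : (#S : ℝ) ≠ 0 := by exact_mod_cast hS.card_ne_zero
  have hmean : (#S : ℝ)⁻¹ • ∑ i ∈ S, x i - ν = (#S : ℝ)⁻¹ • ∑ i ∈ S, (x i - ν) := by
    rw [sum_sub_distrib, smul_sub, sum_const, ← Nat.cast_smul_eq_nsmul ℝ, smul_smul,
      inv_mul_cancel₀ hS0, one_smul]
  rw [hmean, norm_smul, Real.norm_of_nonneg (by positivity)]
  gcongr
  exact norm_sum_le _ _

theorem stmt2_general (n d : ℕ) (x : Fin n → EuclideanSpace ℝ (Fin d))
    (μ μstar : EuclideanSpace ℝ (Fin d)) (m : ℕ) (hm : 1 ≤ m)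
    (S : Finset (Fin n)) (hScard : S.card = m)
    (hsel : ∀ i ∈ S, ∀ j ∉ S, ‖x i - μ‖ ≤ ‖x j - μ‖)
    (Sstar : Finset (Fin n)) (hSstar : Sstar.card = m)
    (μ' : EuclideanSpace ℝ (Fin d)) (hμ' : μ' = (m : ℝ)⁻¹ • ∑ i ∈ S, x i) :
    ‖μ' - μstar‖ ≤ (2 * ((S \ Sstar).card : ℝ) / m) * ‖μ - μstar‖
      + (1 / m) * ∑ i ∈ Sstar, ‖x i - μstar‖ := by
  have hS : S.Nonempty := card_pos.mp (hScard ▸ hm)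
  have hrecenter : ∑ i ∈ S, ‖x i - μstar‖
      ≤ ∑ i ∈ Sstar, ‖x i - μstar‖ + 2 * #(S \ Sstar) * ‖μ - μstar‖ :=
    sum_le_sum_add_of_forall_le_of_abs_sub_le _ _ (hScard.trans hSstar.symm) hsel fun i => by
      simpa only [sub_sub_sub_cancel_left, norm_sub_rev μstar μ] using abs_norm_sub_norm_le (x i - μ) (x i - μstar)
  calc ‖μ' - μstar‖ ≤ (m : ℝ)⁻¹ * ∑ i ∈ S, ‖x i - μstar‖ := by
        subst hμ' hScard
        exact norm_inv_card_smul_sum_sub_le hS x μstar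
    _ ≤ (m : ℝ)⁻¹ * (∑ i ∈ Sstar, ‖x i - μstar‖ + 2 * #(S \ Sstar) * ‖μ - μstar‖) := by
        gcongr
    _ = (2 * (#(S \ Sstar) : ℝ) / m) * ‖μ - μstar‖ + (1 / m) * ∑ i ∈ Sstar, ‖x i - μstar‖ := by
        ring

theorem stmt2 (n d : ℕ) (x : Fin n → EuclideanSpace ℝ (Fin d))
    (μ μstar : EuclideanSpace ℝ (Fin d)) (m : ℕ) (hm : 1 ≤ m) (hmn : m ≤ n)
    (S : Finset (Fin n)) (hScard : S.card = m)
    (hsel : ∀ i ∈ S, ∀ j ∉ S, ‖x i - μ‖ ≤ ‖x j - μ‖)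
    (Sstar : Finset (Fin n)) (hSstar : Sstar.card = m)
    (μ' : EuclideanSpace ℝ (Fin d)) (hμ' : μ' = (m : ℝ)⁻¹ • ∑ i ∈ S, x i) :
    ‖μ' - μstar‖ ≤ (2 * ((S \ Sstar).card : ℝ) / m) * ‖μ - μstar‖
      + (1 / m) * ∑ i ∈ Sstar, ‖x i - μstar‖ :=
  stmt2_general n d x μ μstar m hm S hScard hsel Sstar hSstar μ' hμ'
end

section
/- Let x_1, …, x_n be independent random vectors in ℝ^d with common mean μ* and covariance matrices Σ_1, …, Σ_n, and let λ_(k) denote the k-th smallest value among {λ_max(Σ_i)}_{i=1}^n. Fix α ≥ 4/5. Then with probability at least 1 − 5/(4n), the following holds simultaneously for every μ ∈ ℝ^d: if S is any subset of {1,…,n} of size ⌈αn⌉ minimizing Σ_{i∈S} ‖x_i − μ‖₂² over all subsets of size ⌈αn⌉, and μ' = (1/⌈αn⌉) Σ_{i∈S} x_i, then ‖μ' − μ*‖₂ ≤ (1/2)·‖μ − μ*‖₂ + 2√(d·λ_(⌈αn⌉)). -/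
set_option autoImplicit false

open MeasureTheory ProbabilityTheory Finset
open scoped ENNReal NNReal

/-- The largest eigenvalue of a matrix. -/
noncomputable def lambdaMax {d : ℕ} (M : Matrix (Fin d) (Fin d) ℝ) : ℝ :=
  sSup {r : ℝ | ∃ v : Fin d → ℝ, v ≠ 0 ∧ M.mulVec v = r • v}

/-- `orderStat f k` is the `k`-th smallest (0-indexed) value among `f 0, …, f (n-1)`. -/
noncomputable def orderStat {n : ℕ} (f : Fin n → ℝ) (k : Fin n) : ℝ := f (Tuple.sort f k)

lemma ceil_pred_lt (α : ℝ) (n : ℕ) (hn : 0 < n) (hα1 : α ≤ 1) : ⌈α * (n : ℝ)⌉₊ - 1 < n := by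
  have h : ⌈α * (n : ℝ)⌉₊ ≤ n := by
    rw [Nat.ceil_le]
    calc α * (n : ℝ) ≤ 1 * (n : ℝ) := by nlinarith [Nat.cast_nonneg (α := ℝ) n]
      _ = (n : ℝ) := one_mul _
  omega

/-!
Let `k = ⌈αn⌉`, let `T` be the `k` indices with the smallest `λ_max(Σᵢ)` and put
`σ² = d λ_(k)`. For `i ∈ T`, `E‖xᵢ - μ*‖² = tr Σᵢ ≤ d λ_max(Σᵢ) ≤ σ²`. Writing
`aᵢ = E‖xᵢ - μ*‖ ≤ σ`, independence gives `Var (∑_T ‖xᵢ - μ*‖) ≤ ∑ (σ² - aᵢ²) ≤ 2σ(kσ - ∑ aᵢ)`,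
so Chebyshev's inequality bounds the probability that `∑_T ‖xᵢ - μ*‖ > 2kσ` by
`1/(2k) ≤ 5/(4n)`.

Outside this event the bound is deterministic. A minimizing `S` keeps its points closest to
`μ`, so each `i ∈ S \ T` satisfies `‖xᵢ - μ*‖ ≤ ‖xⱼ - μ*‖ + 2‖μ - μ*‖` for every `j ∈ T \ S`;
since `|S \ T| ≤ n - k ≤ k/4`, summing over `S` gives
`∑_S ‖xᵢ - μ*‖ ≤ ∑_T ‖xᵢ - μ*‖ + (k/2)‖μ - μ*‖ ≤ 2kσ + (k/2)‖μ - μ*‖`.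
-/

lemma bddAbove_setOf_eigenvalue {d : ℕ} (M : Matrix (Fin d) (Fin d) ℝ) :
    BddAbove {r : ℝ | ∃ v : Fin d → ℝ, v ≠ 0 ∧ M.mulVec v = r • v} := by
  refine ((Module.End.finite_hasEigenvalue (Matrix.toLin' M)).subset ?_).bddAbove
  rintro r ⟨v, hv, hMv⟩
  exact Module.End.hasEigenvalue_of_hasEigenvector
    ⟨Module.End.mem_eigenspace_iff.2 (by rwa [Matrix.toLin'_apply]), hv⟩

lemma Matrix.IsHermitian.eigenvalues_le_lambdaMax {d : ℕ} {M : Matrix (Fin d) (Fin d) ℝ}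
    (hM : M.IsHermitian) (i : Fin d) : hM.eigenvalues i ≤ lambdaMax M :=
  le_csSup (bddAbove_setOf_eigenvalue M)
    ⟨_, fun h => hM.eigenvectorBasis.orthonormal.ne_zero i
      (by simpa using congrArg (WithLp.toLp 2) h),
      hM.mulVec_eigenvectorBasis i⟩

lemma Matrix.IsHermitian.trace_le_card_mul_lambdaMax {d : ℕ} {M : Matrix (Fin d) (Fin d) ℝ}
    (hM : M.IsHermitian) : M.trace ≤ d * lambdaMax M := by
  rw [hM.trace_eq_sum_eigenvalues]
  simpa using Finset.sum_le_sum fun i (_ : i ∈ univ) => hM.eigenvalues_le_lambdaMax i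

lemma exists_card_eq_forall_le_orderStat {n : ℕ} (f : Fin n → ℝ) (k : Fin n) :
    ∃ T : Finset (Fin n), #T = k + 1 ∧ ∀ i ∈ T, f i ≤ orderStat f k := by
  refine ⟨(Iic k).map (Tuple.sort f).toEmbedding, by simp, ?_⟩
  simp only [mem_map, mem_Iic, Equiv.toEmbedding_apply, forall_exists_index, and_imp]
  rintro _ j hj rfl
  exact Tuple.monotone_sort f hj

section SecondMoment

variable {Ω : Type*} [MeasurableSpace Ω] {P : Measure Ω} {d : ℕ}
  {X : Ω → EuclideanSpace ℝ (Fin d)} {m : EuclideanSpace ℝ (Fin d)}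
  {M : Matrix (Fin d) (Fin d) ℝ}

lemma isHermitian_of_eq_integral_mul
    (hM : ∀ j k, M j k = ∫ ω, (X ω j - m j) * (X ω k - m k) ∂P) : M.IsHermitian :=
  Matrix.IsHermitian.ext fun j k => by simp only [hM, star_trivial, mul_comm]

lemma integral_norm_sub_sq_eq_trace [IsFiniteMeasure P] (hX : MemLp X 2 P)
    (hM : ∀ j k, M j k = ∫ ω, (X ω j - m j) * (X ω k - m k) ∂P) :
    ∫ ω, ‖X ω - m‖ ^ 2 ∂P = M.trace := by
  have hcoord (j : Fin d) : Integrable (fun ω => (X ω j - m j) ^ 2) P :=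
    ((EuclideanSpace.proj (𝕜 := ℝ) j).comp_memLp' (hX.sub (memLp_const m))).integrable_sq
  simp_rw [EuclideanSpace.real_norm_sq_eq, PiLp.sub_apply]
  rw [integral_finsetSum _ fun j _ => hcoord j, Matrix.trace]
  simp [hM, sq]

lemma integral_norm_sub_sq_le_card_mul_lambdaMax [IsFiniteMeasure P] (hX : MemLp X 2 P)
    (hM : ∀ j k, M j k = ∫ ω, (X ω j - m j) * (X ω k - m k) ∂P) :
    ∫ ω, ‖X ω - m‖ ^ 2 ∂P ≤ d * lambdaMax M :=
  integral_norm_sub_sq_eq_trace hX hM ▸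
    Matrix.IsHermitian.trace_le_card_mul_lambdaMax (isHermitian_of_eq_integral_mul hM)

end SecondMoment

section Concentration

variable {Ω ι : Type*} [MeasurableSpace Ω] {P : Measure Ω} {σ : ℝ}
  {Z : ι → Ω → ℝ} {T : Finset ι}

lemma ae_eq_zero_of_integral_sq_le_zero {Y : Ω → ℝ} (hY : MemLp Y 2 P)
    (hsq : ∫ ω, Y ω ^ 2 ∂P ≤ 0) : Y =ᵐ[P] 0 := by
  have hsq0 : ∫ ω, Y ω ^ 2 ∂P = 0 :=
    le_antisymm hsq (integral_nonneg fun ω => sq_nonneg _)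
  filter_upwards [(integral_eq_zero_iff_of_nonneg (fun ω => sq_nonneg (Y ω))
    hY.integrable_sq).1 hsq0] with ω hω
  simpa using hω

lemma integral_sum_eq_sum_integral (hZ : ∀ i ∈ T, Integrable (Z i) P) :
    P[∑ i ∈ T, Z i] = ∑ i ∈ T, P[Z i] := by
  simp_rw [Finset.sum_apply]
  exact integral_finsetSum _ hZ

variable [IsProbabilityMeasure P]

lemma variance_le_two_mul_sub_integral {Y : Ω → ℝ} (hY : MemLp Y 2 P)
    (hsq : ∫ ω, Y ω ^ 2 ∂P ≤ σ ^ 2) : Var[Y; P] ≤ 2 * σ * (σ - P[Y]) := by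
  have h := variance_eq_sub hY
  simp only [Pi.pow_apply] at h
  nlinarith [sq_nonneg (σ - P[Y])]

lemma integral_le_of_integral_sq_le {Y : Ω → ℝ} (hY : MemLp Y 2 P) (hσ : 0 ≤ σ)
    (hsq : ∫ ω, Y ω ^ 2 ∂P ≤ σ ^ 2) : P[Y] ≤ σ := by
  have h := variance_eq_sub hY
  simp only [Pi.pow_apply] at h
  exact (abs_le_of_sq_le_sq (by linarith [variance_nonneg Y P]) hσ).trans' (le_abs_self _)

lemma integral_sum_le_card_mul (hZ : ∀ i ∈ T, MemLp (Z i) 2 P) (hσ : 0 ≤ σ)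
    (hsq : ∀ i ∈ T, ∫ ω, Z i ω ^ 2 ∂P ≤ σ ^ 2) : P[∑ i ∈ T, Z i] ≤ #T * σ := by
  rw [integral_sum_eq_sum_integral fun i hi => (hZ i hi).integrable one_le_two]
  simpa using sum_le_sum fun i hi => integral_le_of_integral_sq_le (hZ i hi) hσ (hsq i hi)

lemma variance_sum_le_two_mul (hZ : ∀ i ∈ T, MemLp (Z i) 2 P)
    (hindep : (T : Set ι).Pairwise fun i j => IndepFun (Z i) (Z j) P)
    (hsq : ∀ i ∈ T, ∫ ω, Z i ω ^ 2 ∂P ≤ σ ^ 2) :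
    Var[∑ i ∈ T, Z i; P] ≤ 2 * σ * (#T * σ - P[∑ i ∈ T, Z i]) := calc
  Var[∑ i ∈ T, Z i; P] = ∑ i ∈ T, Var[Z i; P] := IndepFun.variance_sum hZ hindep
  _ ≤ ∑ i ∈ T, 2 * σ * (σ - P[Z i]) :=
      sum_le_sum fun i hi => variance_le_two_mul_sub_integral (hZ i hi) (hsq i hi)
  _ = 2 * σ * (#T * σ - P[∑ i ∈ T, Z i]) := by
      rw [integral_sum_eq_sum_integral fun i hi => (hZ i hi).integrable one_le_two, ← mul_sum,
        sum_sub_distrib, sum_const, nsmul_eq_mul]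

lemma measure_two_mul_card_mul_lt_sum_le_of_pos (hT : T.Nonempty) (hσ : 0 < σ)
    (hZ : ∀ i ∈ T, MemLp (Z i) 2 P)
    (hindep : (T : Set ι).Pairwise fun i j => IndepFun (Z i) (Z j) P)
    (hsq : ∀ i ∈ T, ∫ ω, Z i ω ^ 2 ∂P ≤ σ ^ 2) :
    P {ω | 2 * #T * σ < ∑ i ∈ T, Z i ω} ≤ ENNReal.ofReal (1 / (2 * #T)) := by
  set k : ℝ := ((#T : ℕ) : ℝ)
  have hk : 0 < k := Nat.cast_pos.2 hT.card_pos
  set Y : Ω → ℝ := ∑ i ∈ T, Z i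
  set D : ℝ := k * σ - P[Y]
  have hD : 0 ≤ D := sub_nonneg.2 (integral_sum_le_card_mul hZ hσ.le hsq)
  have hvar : Var[Y; P] ≤ 2 * σ * D := variance_sum_le_two_mul hZ hindep hsq
  have ht : 0 < k * σ + D := by positivity
  calc P {ω | 2 * k * σ < ∑ i ∈ T, Z i ω}
      ≤ P {ω | k * σ + D ≤ |Y ω - P[Y]|} := by
        refine measure_mono fun ω hω => ?_
        simp only [Set.mem_ofPred_eq] at hω ⊢
        rw [show Y ω = ∑ i ∈ T, Z i ω from Finset.sum_apply ω T Z]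
        exact (le_abs_self _).trans' (by simp only [D]; linarith)
    _ ≤ ENNReal.ofReal (Var[Y; P] / (k * σ + D) ^ 2) :=
        meas_ge_le_variance_div_sq (memLp_finsetSum' T hZ) ht
    _ ≤ ENNReal.ofReal (1 / (2 * k)) := by
        refine ENNReal.ofReal_le_ofReal ?_
        rw [div_le_div_iff₀ (by positivity) (by positivity)]
        -- AM-GM: 4 k σ D ≤ (k σ + D)²
        nlinarith [sq_nonneg (k * σ - D)]

lemma measure_two_mul_card_mul_lt_sum_le (hσ : 0 ≤ σ) (hZ : ∀ i ∈ T, MemLp (Z i) 2 P)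
    (hindep : (T : Set ι).Pairwise fun i j => IndepFun (Z i) (Z j) P)
    (hsq : ∀ i ∈ T, ∫ ω, Z i ω ^ 2 ∂P ≤ σ ^ 2) :
    P {ω | 2 * #T * σ < ∑ i ∈ T, Z i ω} ≤ ENNReal.ofReal (1 / (2 * #T)) := by
  rcases T.eq_empty_or_nonempty with rfl | hT
  · simp
  rcases hσ.eq_or_lt with rfl | hσ
  · have hzero : ∀ᵐ ω ∂P, ∀ i ∈ T, Z i ω = 0 := (Filter.eventually_all_finset T).2 fun i hi =>
      ae_eq_zero_of_integral_sq_le_zero (hZ i hi) (by simpa using hsq i hi)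
    refine (measure_mono_null (fun ω hω hall => ?_) (ae_iff.1 hzero)).trans_le zero_le
    simp [sum_eq_zero hall] at hω
  exact measure_two_mul_card_mul_lt_sum_le_of_pos hT hσ hZ hindep hsq

end Concentration

section TrimmedMean

variable {ι : Type*} [DecidableEq ι]

lemma le_of_sum_le_sum_of_card_eq {f : ι → ℝ} {S : Finset ι}
    (hmin : ∀ S' : Finset ι, #S' = #S → ∑ i ∈ S, f i ≤ ∑ i ∈ S', f i)
    {i j : ι} (hi : i ∈ S) (hj : j ∉ S) : f i ≤ f j := by
  have hj' : j ∉ S.erase i := fun h => hj (mem_of_mem_erase h)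
  have h := hmin (insert j (S.erase i)) (by
    rw [card_insert_of_notMem hj', card_erase_add_one hi])
  rw [sum_insert hj', ← add_sum_erase S f hi] at h
  linarith

lemma sum_le_sum_add_card_sdiff_mul {g : ι → ℝ} {S T : Finset ι} {c : ℝ} (hST : #S = #T)
    (h : ∀ i ∈ S \ T, ∀ j ∈ T \ S, g i ≤ g j + c) :
    ∑ i ∈ S, g i ≤ ∑ i ∈ T, g i + #(S \ T) * c := by
  suffices ∑ i ∈ S \ T, g i ≤ ∑ j ∈ T \ S, g j + #(S \ T) * c by
    linarith [sum_sdiff_sub_sum_sdiff (s₁ := T) (s₂ := S) (f := g)]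
  have hcard : #(S \ T) = #(T \ S) := card_sdiff_comm hST
  rcases (T \ S).eq_empty_or_nonempty with hTS | hTS
  · rw [card_eq_zero.1 (hcard.trans (card_eq_zero.2 hTS)), hTS]
    simp
  obtain ⟨j₀, hj₀, hj₀_min⟩ := exists_min_image (T \ S) g hTS
  calc ∑ i ∈ S \ T, g i ≤ ∑ _i ∈ S \ T, (g j₀ + c) := sum_le_sum fun i hi => h i hi j₀ hj₀
    _ = #(T \ S) • g j₀ + #(S \ T) * c := by rw [sum_const, hcard, nsmul_eq_mul, nsmul_eq_mul]; ring
    _ ≤ ∑ j ∈ T \ S, g j + #(S \ T) * c := by gcongr; exact card_nsmul_le_sum _ _ _ hj₀_min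

variable {E : Type*} [NormedAddCommGroup E] [NormedSpace ℝ E]

theorem norm_inv_smul_sum_sub_le {x : ι → E} {μ m : E} {S T : Finset ι} {k : ℕ}
    (hk : 0 < k) (hS : #S = k) (hT : #T = k)
    (hmin : ∀ S' : Finset ι, #S' = k → ∑ i ∈ S, ‖x i - μ‖ ^ 2 ≤ ∑ i ∈ S', ‖x i - μ‖ ^ 2)
    (hST : 4 * #(S \ T) ≤ k) :
    ‖(k : ℝ)⁻¹ • ∑ i ∈ S, x i - m‖ ≤ 1 / 2 * ‖μ - m‖ + (k : ℝ)⁻¹ * ∑ i ∈ T, ‖x i - m‖ := by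
  have hkR : (0 : ℝ) < k := Nat.cast_pos.2 hk
  have hclose : ∀ i ∈ S \ T, ∀ j ∈ T \ S, ‖x i - m‖ ≤ ‖x j - m‖ + 2 * ‖μ - m‖ := by
    intro i hi j hj
    have hij : ‖x i - μ‖ ≤ ‖x j - μ‖ := by
      refine (pow_le_pow_iff_left₀ (norm_nonneg _) (norm_nonneg _) two_ne_zero).1 ?_
      exact le_of_sum_le_sum_of_card_eq (f := fun i => ‖x i - μ‖ ^ 2) (hS ▸ hmin)
        (mem_sdiff.1 hi).1 (mem_sdiff.1 hj).2
    linarith [norm_sub_le_norm_sub_add_norm_sub (x i) μ m,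
      norm_sub_le_norm_sub_add_norm_sub (x j) m μ, norm_sub_rev m μ]
  have hsum := sum_le_sum_add_card_sdiff_mul (hS.trans hT.symm) hclose
  have hST' : (4 : ℝ) * #(S \ T) ≤ k := by exact_mod_cast hST
  have hcenter : (k : ℝ)⁻¹ • ∑ i ∈ S, x i - m = (k : ℝ)⁻¹ • ∑ i ∈ S, (x i - m) := by
    rw [sum_sub_distrib, sum_const, hS, smul_sub, ← Nat.cast_smul_eq_nsmul ℝ,
      inv_smul_smul₀ hkR.ne']
  calc ‖(k : ℝ)⁻¹ • ∑ i ∈ S, x i - m‖ = (k : ℝ)⁻¹ * ‖∑ i ∈ S, (x i - m)‖ := by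
        rw [hcenter, norm_smul, norm_inv, Real.norm_natCast]
    _ ≤ (k : ℝ)⁻¹ * ∑ i ∈ S, ‖x i - m‖ := by gcongr; exact norm_sum_le _ _
    _ ≤ (k : ℝ)⁻¹ * (∑ i ∈ T, ‖x i - m‖ + k / 2 * ‖μ - m‖) := by
        gcongr; nlinarith [norm_nonneg (μ - m)]
    _ = 1 / 2 * ‖μ - m‖ + (k : ℝ)⁻¹ * ∑ i ∈ T, ‖x i - m‖ := by field_simp; ring

end TrimmedMean

lemma four_mul_le_five_mul_ceil {α : ℝ} (hα : 4 / 5 ≤ α) (n : ℕ) : 4 * n ≤ 5 * ⌈α * n⌉₊ := by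
  have : (4 : ℝ) * n ≤ 5 * ⌈α * n⌉₊ := by
    nlinarith [Nat.le_ceil (α * n), (Nat.cast_nonneg n : (0 : ℝ) ≤ n)]
  exact_mod_cast this

lemma four_mul_card_sdiff_le {n k : ℕ} {S T : Finset (Fin n)} (hT : #T = k) (hkn : 4 * n ≤ 5 * k) :
    4 * #(S \ T) ≤ k := by
  have := card_le_card (sdiff_subset_sdiff (subset_univ S) le_rfl : S \ T ⊆ univ \ T)
  rw [card_univ_sdiff, hT, Fintype.card_fin] at this
  omega

lemma ofReal_one_div_two_mul_le {n k : ℕ} (hn : 0 < n) (hkn : 4 * n ≤ 5 * k) :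
    ENNReal.ofReal (1 / (2 * k)) ≤ 5 / (4 * (n : ℝ≥0∞)) := by
  have hkn' : (4 : ℝ) * n ≤ 5 * k := by exact_mod_cast hkn
  calc ENNReal.ofReal (1 / (2 * k)) ≤ ENNReal.ofReal (5 / (4 * n)) := by
        refine ENNReal.ofReal_le_ofReal ?_
        have hnR : (0 : ℝ) < n := Nat.cast_pos.2 hn
        rw [div_le_div_iff₀ (by linarith) (by positivity)]
        linarith
    _ = 5 / (4 * (n : ℝ≥0∞)) := by
        rw [ENNReal.ofReal_div_of_pos (by positivity), ENNReal.ofReal_mul (by norm_num)]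
        norm_num

lemma one_sub_le_measure_of_compl_subset {Ω : Type*} [MeasurableSpace Ω] {P : Measure Ω}
    [IsProbabilityMeasure P] {s t : Set Ω} {ε : ℝ≥0∞} (hs : P s ≤ ε) (hst : sᶜ ⊆ t) :
    1 - ε ≤ P t := calc
  1 - ε ≤ 1 - P s := tsub_le_tsub_left hs 1
  _ ≤ P sᶜ := tsub_le_iff_left.2 (measure_univ (μ := P) ▸ measure_univ_le_add_compl s)
  _ ≤ P t := measure_mono hst

theorem stmt3_general {Ω : Type*} [MeasurableSpace Ω] (P : Measure Ω) [IsProbabilityMeasure P]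
    (n d : ℕ) (hn : 0 < n)
    (X : Fin n → Ω → EuclideanSpace ℝ (Fin d))
    (μstar : EuclideanSpace ℝ (Fin d)) (Sigm : Fin n → Matrix (Fin d) (Fin d) ℝ)
    (hindep : iIndepFun X P)
    (hL2 : ∀ i, MemLp (X i) 2 P)
    (hcov : ∀ i, ∀ j k : Fin d,
      Sigm i j k = ∫ ω, (X i ω j - μstar j) * (X i ω k - μstar k) ∂P)
    (α : ℝ) (hα : 4 / 5 ≤ α) (hα1 : α ≤ 1) :
    P {ω | ∀ μ : EuclideanSpace ℝ (Fin d), ∀ S : Finset (Fin n),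
        S.card = ⌈α * (n : ℝ)⌉₊ →
        (∀ S' : Finset (Fin n), S'.card = ⌈α * (n : ℝ)⌉₊ →
          ∑ i ∈ S, ‖X i ω - μ‖ ^ 2 ≤ ∑ i ∈ S', ‖X i ω - μ‖ ^ 2) →
        ‖(⌈α * (n : ℝ)⌉₊ : ℝ)⁻¹ • (∑ i ∈ S, X i ω) - μstar‖
          ≤ (1 / 2) * ‖μ - μstar‖
            + 2 * Real.sqrt (d * orderStat (fun i => lambdaMax (Sigm i))
                ⟨⌈α * (n : ℝ)⌉₊ - 1, ceil_pred_lt α n hn hα1⟩)}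
      ≥ 1 - 5 / (4 * (n : ℝ≥0∞)) := by
  set k := ⌈α * (n : ℝ)⌉₊
  have hkn : 4 * n ≤ 5 * k := four_mul_le_five_mul_ceil hα n
  have hk : 0 < k := by omega
  obtain ⟨T, hTcard, hTlam⟩ := exists_card_eq_forall_le_orderStat
    (fun i => lambdaMax (Sigm i)) ⟨k - 1, ceil_pred_lt α n hn hα1⟩
  replace hTcard : #T = k := by simp only at hTcard; omega
  set σ := Real.sqrt (d * orderStat (fun i => lambdaMax (Sigm i)) ⟨k - 1, ceil_pred_lt α n hn hα1⟩)
  have hsq (i : Fin n) (hi : i ∈ T) : ∫ ω, ‖X i ω - μstar‖ ^ 2 ∂P ≤ σ ^ 2 := calc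
    _ ≤ d * lambdaMax (Sigm i) := integral_norm_sub_sq_le_card_mul_lambdaMax (hL2 i) (hcov i)
    _ ≤ _ := by gcongr; exact hTlam i hi
    _ ≤ σ ^ 2 := Real.sq_sqrt' (x := _) ▸ le_max_left _ _
  have hbad := measure_two_mul_card_mul_lt_sum_le (Z := fun i ω => ‖X i ω - μstar‖)
    (Real.sqrt_nonneg _) (fun i _ => ((hL2 i).sub (memLp_const μstar)).norm)
    (fun i _ j _ hij => (hindep.comp _ fun _ => (measurable_id.sub_const μstar).norm).indepFun hij)
    hsq
  rw [hTcard] at hbad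
  refine one_sub_le_measure_of_compl_subset (hbad.trans (ofReal_one_div_two_mul_le hn hkn)) ?_
  intro ω (hω : ¬ 2 * k * σ < ∑ i ∈ T, ‖X i ω - μstar‖) μ S hS hmin
  have hsum : (k : ℝ)⁻¹ * ∑ i ∈ T, ‖X i ω - μstar‖ ≤ 2 * σ := by
    rw [inv_mul_le_iff₀ (by positivity)]
    linarith [not_lt.1 hω]
  linarith [norm_inv_smul_sum_sub_le hk hS hTcard hmin
    (four_mul_card_sdiff_le hTcard hkn) (m := μstar)]

theorem stmt3 {Ω : Type*} [MeasurableSpace Ω] (P : Measure Ω) [IsProbabilityMeasure P]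
    (n d : ℕ) (hn : 0 < n)
    (X : Fin n → Ω → EuclideanSpace ℝ (Fin d))
    (μstar : EuclideanSpace ℝ (Fin d)) (Sigm : Fin n → Matrix (Fin d) (Fin d) ℝ)
    (hindep : iIndepFun X P)
    (hL2 : ∀ i, MemLp (X i) 2 P)
    (hmean : ∀ i, ∫ ω, X i ω ∂P = μstar)
    (hcov : ∀ i, ∀ j k : Fin d,
      Sigm i j k = ∫ ω, (X i ω j - μstar j) * (X i ω k - μstar k) ∂P)
    (α : ℝ) (hα : 4 / 5 ≤ α) (hα1 : α ≤ 1) :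
    P {ω | ∀ μ : EuclideanSpace ℝ (Fin d), ∀ S : Finset (Fin n),
        S.card = ⌈α * (n : ℝ)⌉₊ →
        (∀ S' : Finset (Fin n), S'.card = ⌈α * (n : ℝ)⌉₊ →
          ∑ i ∈ S, ‖X i ω - μ‖ ^ 2 ≤ ∑ i ∈ S', ‖X i ω - μ‖ ^ 2) →
        ‖(⌈α * (n : ℝ)⌉₊ : ℝ)⁻¹ • (∑ i ∈ S, X i ω) - μstar‖
          ≤ (1 / 2) * ‖μ - μstar‖
            + 2 * Real.sqrt (d * orderStat (fun i => lambdaMax (Sigm i))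
                ⟨⌈α * (n : ℝ)⌉₊ - 1, ceil_pred_lt α n hn hα1⟩)}
      ≥ 1 - 5 / (4 * (n : ℝ≥0∞)) :=
  stmt3_general P n d hn X μstar Sigm hindep hL2 hcov α hα hα1
end

section
/- Let x_1, …, x_n ∈ ℝ^d, let A and B be disjoint subsets of {1,…,n} with |A| = |B|, let φ: A → B be a bijection, and let n_i ∈ {−1, +1} for i ∈ A. Then the largest singular value of the d×d matrix M = Σ_{i∈A} n_i · x_i x_{φ(i)}ᵀ satisfies s_max(M) ≤ ψ⁺(|A|), where ψ⁺(k) := max_{S ⊆ {1,…,n}, |S|=k} λ_max(Σ_{i∈S} x_i x_iᵀ). -/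
set_option autoImplicit false

open Finset Matrix

/-- The Gram matrix `∑_{i ∈ S} x_i x_iᵀ` of a subset of the sample points. -/
noncomputable def gramMatrix {n d : ℕ} (x : Fin n → EuclideanSpace ℝ (Fin d))
    (S : Finset (Fin n)) : Matrix (Fin d) (Fin d) ℝ :=
  ∑ i ∈ S, Matrix.of fun j k => x i j * x i k

/-- `ψ⁺(k)`: the maximum over all size-`k` subsets `S` of the largest eigenvalue
of `∑_{i ∈ S} x_i x_iᵀ`. -/
noncomputable def psiPlus {n d : ℕ} (x : Fin n → EuclideanSpace ℝ (Fin d)) (k : ℕ) : ℝ :=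
  sSup {r : ℝ | ∃ S : Finset (Fin n), S.card = k ∧ r = lambdaMax (gramMatrix x S)}

/-- The largest singular value of a real square matrix. -/
noncomputable def sMax {d : ℕ} (M : Matrix (Fin d) (Fin d) ℝ) : ℝ :=
  Real.sqrt (lambdaMax (Mᵀ * M))

/-!
Writing `M = ∑_{i ∈ A} n_i x_i x_{φ(i)}ᵀ`, the bilinear form `uᵀ M v = ∑_{i ∈ A} n_i ⟨u, x_i⟩ ⟨x_{φ(i)}, v⟩`
is bounded by Cauchy–Schwarz by `(∑_{i ∈ A} ⟨x_i, u⟩²)^{1/2} (∑_{j ∈ φ(A)} ⟨x_j, v⟩²)^{1/2}`.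
Both sums are quadratic forms of Gram matrices of `|A|` points, so by the Rayleigh bound each is at
most `ψ⁺(|A|)` times the squared norm. Hence `|uᵀ M v| ≤ ψ⁺(|A|) ‖u‖ ‖v‖`, and taking `u = M v`
gives `‖M v‖² ≤ ψ⁺(|A|)² ‖v‖²`, which bounds every eigenvalue of `Mᵀ M` by `ψ⁺(|A|)²`.
-/

lemma Matrix.dotProduct_self_nonneg {ι R : Type*} [Fintype ι] [Ring R] [LinearOrder R]
    [IsStrictOrderedRing R] (v : ι → R) : 0 ≤ v ⬝ᵥ v :=
  Finset.sum_nonneg fun i _ => mul_self_nonneg (v i)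

lemma Matrix.dotProduct_self_pos {ι R : Type*} [Fintype ι] [Ring R] [LinearOrder R]
    [IsStrictOrderedRing R] {v : ι → R} (hv : v ≠ 0) : 0 < v ⬝ᵥ v :=
  lt_of_le_of_ne' (dotProduct_self_nonneg v) (dotProduct_self_eq_zero.not.2 hv)

lemma Matrix.dotProduct_sum_smul_vecMulVec_mulVec {ι m R : Type*} [Fintype m] [CommSemiring R]
    (s : Finset ι) (c : ι → R) (a b : ι → m → R) (u v : m → R) :
    u ⬝ᵥ (∑ i ∈ s, c i • vecMulVec (a i) (b i)) *ᵥ v = ∑ i ∈ s, c i * (u ⬝ᵥ a i) * (b i ⬝ᵥ v) := by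
  simp [sum_mulVec, smul_mulVec, vecMulVec_mulVec, dotProduct_sum, mul_comm, mul_left_comm]

section LambdaMax

open scoped MatrixOrder

variable {d : ℕ}

lemma eigenvalueSet_eq_spectrum (G : Matrix (Fin d) (Fin d) ℝ) :
    {r : ℝ | ∃ v : Fin d → ℝ, v ≠ 0 ∧ G *ᵥ v = r • v} = spectrum ℝ G := by
  ext r
  rw [← Matrix.spectrum_toLin', ← Module.End.hasEigenvalue_iff_mem_spectrum,
    Module.End.hasEigenvalue_iff, Submodule.ne_bot_iff]
  simp [and_comm]

lemma lambdaMax_eq_sSup_spectrum (G : Matrix (Fin d) (Fin d) ℝ) :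
    lambdaMax G = sSup (spectrum ℝ G) := by
  rw [lambdaMax, eigenvalueSet_eq_spectrum]

lemma Matrix.PosSemidef.lambdaMax_nonneg {G : Matrix (Fin d) (Fin d) ℝ} (hG : G.PosSemidef) :
    0 ≤ lambdaMax G := by
  rw [lambdaMax_eq_sSup_spectrum]
  exact Real.sSup_nonneg fun r hr => spectrum_nonneg_of_nonneg hG.nonneg hr

lemma Matrix.IsHermitian.le_lambdaMax_smul_one {G : Matrix (Fin d) (Fin d) ℝ}
    (hG : G.IsHermitian) : G ≤ algebraMap ℝ _ (lambdaMax G) := by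
  rw [le_algebraMap_iff_spectrum_le hG.isSelfAdjoint, lambdaMax_eq_sSup_spectrum]
  exact fun r hr => le_csSup Matrix.finite_real_spectrum.bddAbove hr

lemma Matrix.IsHermitian.dotProduct_mulVec_le_lambdaMax {G : Matrix (Fin d) (Fin d) ℝ}
    (hG : G.IsHermitian) (v : Fin d → ℝ) : v ⬝ᵥ G *ᵥ v ≤ lambdaMax G * (v ⬝ᵥ v) := by
  have := (Matrix.le_iff.1 hG.le_lambdaMax_smul_one).dotProduct_mulVec_nonneg v
  simp only [star_trivial, sub_mulVec, dotProduct_sub, Algebra.algebraMap_eq_smul_one,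
    smul_mulVec, one_mulVec, dotProduct_smul, smul_eq_mul] at this
  linarith

lemma lambdaMax_transpose_mul_self_le {M : Matrix (Fin d) (Fin d) ℝ} {c : ℝ} (hc : 0 ≤ c)
    (hM : ∀ v, M *ᵥ v ⬝ᵥ M *ᵥ v ≤ c * (v ⬝ᵥ v)) : lambdaMax (Mᵀ * M) ≤ c := by
  refine Real.sSup_le (fun r ⟨v, hv, hMv⟩ => ?_) hc
  have hr : r * (v ⬝ᵥ v) = M *ᵥ v ⬝ᵥ M *ᵥ v := by
    rw [← smul_eq_mul, ← dotProduct_smul, ← hMv, ← mulVec_mulVec, dotProduct_mulVec,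
      vecMul_transpose]
  exact le_of_mul_le_mul_right (hr ▸ hM v) (dotProduct_self_pos hv)

lemma sMax_le_of_sq_dotProduct_mulVec_le {M : Matrix (Fin d) (Fin d) ℝ} {C : ℝ} (hC : 0 ≤ C)
    (hM : ∀ u v, (u ⬝ᵥ M *ᵥ v) ^ 2 ≤ C ^ 2 * (u ⬝ᵥ u) * (v ⬝ᵥ v)) : sMax M ≤ C := by
  have hMv (v : Fin d → ℝ) : M *ᵥ v ⬝ᵥ M *ᵥ v ≤ C ^ 2 * (v ⬝ᵥ v) := by
    have := hM (M *ᵥ v) v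
    have := dotProduct_self_nonneg (M *ᵥ v)
    have := mul_nonneg (sq_nonneg C) (dotProduct_self_nonneg v)
    nlinarith
  rw [sMax, Real.sqrt_le_left hC]
  exact lambdaMax_transpose_mul_self_le (sq_nonneg C) hMv

end LambdaMax

section Gram

variable {n d : ℕ} (x : Fin n → EuclideanSpace ℝ (Fin d))

lemma gramMatrix_eq_sum_vecMulVec (S : Finset (Fin n)) :
    gramMatrix x S = ∑ i ∈ S, vecMulVec (x i).ofLp (x i).ofLp := rfl

lemma posSemidef_gramMatrix (S : Finset (Fin n)) : (gramMatrix x S).PosSemidef :=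
  posSemidef_sum S fun i _ => posSemidef_vecMulVec_self_star (x i).ofLp

lemma dotProduct_gramMatrix_mulVec (S : Finset (Fin n)) (v : Fin d → ℝ) :
    v ⬝ᵥ gramMatrix x S *ᵥ v = ∑ i ∈ S, ((x i).ofLp ⬝ᵥ v) ^ 2 := by
  rw [gramMatrix_eq_sum_vecMulVec]
  simpa [sq, dotProduct_comm v] using
    dotProduct_sum_smul_vecMulVec_mulVec S 1 (fun i => (x i).ofLp) (fun i => (x i).ofLp) v v

lemma lambdaMax_gramMatrix_le_psiPlus (S : Finset (Fin n)) :
    lambdaMax (gramMatrix x S) ≤ psiPlus x S.card := by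
  refine le_csSup (Set.Finite.bddAbove ?_) ⟨S, rfl, rfl⟩
  refine (Set.finite_range fun T => lambdaMax (gramMatrix x T)).subset ?_
  rintro _ ⟨T, -, rfl⟩
  exact ⟨T, rfl⟩

lemma psiPlus_nonneg (k : ℕ) : 0 ≤ psiPlus x k :=
  Real.sSup_nonneg fun _ ⟨S, _, hr⟩ =>
    hr ▸ (posSemidef_gramMatrix x S).lambdaMax_nonneg

lemma sum_sq_dotProduct_le_psiPlus (S : Finset (Fin n)) (v : Fin d → ℝ) :
    ∑ i ∈ S, ((x i).ofLp ⬝ᵥ v) ^ 2 ≤ psiPlus x S.card * (v ⬝ᵥ v) := by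
  rw [← dotProduct_gramMatrix_mulVec]
  exact ((posSemidef_gramMatrix x S).isHermitian.dotProduct_mulVec_le_lambdaMax v).trans
    (mul_le_mul_of_nonneg_right (lambdaMax_gramMatrix_le_psiPlus x S) (dotProduct_self_nonneg v))

lemma sq_dotProduct_sum_smul_vecMulVec_mulVec_le (A : Finset (Fin n)) {φ : Fin n → Fin n}
    (hφ : Set.InjOn φ A) {sgn : Fin n → ℝ} (hsgn : ∀ i ∈ A, sgn i = 1 ∨ sgn i = -1)
    (u v : Fin d → ℝ) :
    (u ⬝ᵥ (∑ i ∈ A, sgn i • vecMulVec (x i).ofLp (x (φ i)).ofLp) *ᵥ v) ^ 2 ≤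
      psiPlus x A.card ^ 2 * (u ⬝ᵥ u) * (v ⬝ᵥ v) := by
  have hsq : ∀ i ∈ A, (sgn i * (u ⬝ᵥ (x i).ofLp)) ^ 2 = ((x i).ofLp ⬝ᵥ u) ^ 2 := fun i hi => by
    rcases hsgn i hi with h | h <;> simp [h, dotProduct_comm]
  have himage : (A.image φ).card = A.card := card_image_of_injOn hφ
  rw [dotProduct_sum_smul_vecMulVec_mulVec]
  calc _ ≤ (∑ i ∈ A, (sgn i * (u ⬝ᵥ (x i).ofLp)) ^ 2) * ∑ i ∈ A, ((x (φ i)).ofLp ⬝ᵥ v) ^ 2 :=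
        sum_mul_sq_le_sq_mul_sq A _ _
    _ = (∑ i ∈ A, ((x i).ofLp ⬝ᵥ u) ^ 2) * ∑ j ∈ A.image φ, ((x j).ofLp ⬝ᵥ v) ^ 2 := by
        rw [sum_congr rfl hsq, sum_image hφ]
    _ ≤ (psiPlus x A.card * (u ⬝ᵥ u)) * (psiPlus x A.card * (v ⬝ᵥ v)) := by
        gcongr
        · exact mul_nonneg (psiPlus_nonneg x _) (dotProduct_self_nonneg u)
        · exact sum_sq_dotProduct_le_psiPlus x A u
        · exact himage ▸ sum_sq_dotProduct_le_psiPlus x (A.image φ) v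
    _ = _ := by ring

end Gram

theorem stmt10_general (n d : ℕ) (x : Fin n → EuclideanSpace ℝ (Fin d))
    (A : Finset (Fin n))
    (φ : Fin n → Fin n) (hφinj : Set.InjOn φ ↑A)
    (sgn : Fin n → ℝ) (hsgn : ∀ i ∈ A, sgn i = 1 ∨ sgn i = -1)
    (M : Matrix (Fin d) (Fin d) ℝ)
    (hM : M = ∑ i ∈ A, sgn i • Matrix.of fun j k => x i j * x (φ i) k) :
    sMax M ≤ psiPlus x A.card := by
  subst hM
  exact sMax_le_of_sq_dotProduct_mulVec_le (psiPlus_nonneg x _)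
    (sq_dotProduct_sum_smul_vecMulVec_mulVec_le x A hφinj hsgn)

theorem stmt10 (n d : ℕ) (x : Fin n → EuclideanSpace ℝ (Fin d))
    (A B : Finset (Fin n)) (hAB : Disjoint A B) (hcard : A.card = B.card)
    (φ : Fin n → Fin n) (hφmem : ∀ i ∈ A, φ i ∈ B) (hφinj : Set.InjOn φ ↑A)
    (sgn : Fin n → ℝ) (hsgn : ∀ i ∈ A, sgn i = 1 ∨ sgn i = -1)
    (M : Matrix (Fin d) (Fin d) ℝ)
    (hM : M = ∑ i ∈ A, sgn i • Matrix.of fun j k => x i j * x (φ i) k) :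
    sMax M ≤ psiPlus x A.card :=
  stmt10_general n d x A φ hφinj sgn hsgn M hM
end
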